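/- Let 1 ≤ p < ∞ and U, V ∈ ℝ with U·V ≤ 0. Define g(t) = |U − tV|^p + |U − V|^{p−2}(U − V)V·|t|^p for t ∈ ℝ (with the convention |0|^{p−2}·0 = 0). Then g(t) ≤ g(1) = |U − V|^{p−2}(U − V)U for all t ∈ ℝ. -/

import Mathlib

open MeasureTheory Real Set Filter Topology

noncomputable section

/-- Points of `ℝ^n`. -/
abbrev Pt (n : ℕ) := EuclideanSpace ℝ (Fin n)

/-- The normalizing constant `Λ_{n,p} = p Γ((n+p)/2) / (2 π^{(n-1)/2} Γ((p+1)/2))`. -/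
def Lam (n : ℕ) (p : ℝ) : ℝ :=
  p * Real.Gamma (((n : ℝ) + p) / 2) /
    (2 * Real.pi ^ (((n : ℝ) - 1) / 2) * Real.Gamma ((p + 1) / 2))

variable {n : ℕ}

/-- `Q = ℝ^{2n} \ (Ω^c × Ω^c)`. -/
def Qset (Ω : Set (Pt n)) : Set (Pt n × Pt n) := (Ωᶜ ×ˢ Ωᶜ)ᶜ

/-- The singular kernel `|x - y|^{-(n + pα)}`. -/
def kern (p α : ℝ) (z : Pt n × Pt n) : ℝ := ‖z.1 - z.2‖ ^ (-((n : ℝ) + p * α))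

/-- The `p`-th power of the Gagliardo-type seminorm, `[u]_{α,p}^p`. -/
def gagP (p α : ℝ) (Ω : Set (Pt n)) (u : Pt n → ℝ) : ℝ :=
  ∫ z in Qset Ω, |u z.1 - u z.2| ^ p * kern p α z

/-- The nonlinear form `H_{α,p}(u,v)`. -/
def Hform (p α : ℝ) (Ω : Set (Pt n)) (u v : Pt n → ℝ) : ℝ :=
  ∫ z in Qset Ω,
    |u z.1 - u z.2| ^ (p - 2) * (u z.1 - u z.2) * (v z.1 - v z.2) * kern p α z

/-- `∫_Ω |u|^p`. -/
def lpP (p : ℝ) (Ω : Set (Pt n)) (u : Pt n → ℝ) : ℝ := ∫ x in Ω, |u x| ^ p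

/-- Membership in the space `W^{α,p}`: measurable with finite norm `‖u‖_{α,p}`. -/
def memW (p α : ℝ) (Ω : Set (Pt n)) (u : Pt n → ℝ) : Prop :=
  Measurable u ∧
    ((∫⁻ x in Ω, ENNReal.ofReal (|u x| ^ p)) +
      ∫⁻ z in Qset Ω, ENNReal.ofReal (|u z.1 - u z.2| ^ p * kern p α z)) < ⊤

/-- The norm `‖u‖_{α,p} = (‖u‖_{L^p(Ω)}^p + [u]_{α,p}^p)^{1/p}`. -/
def normW (p α : ℝ) (Ω : Set (Pt n)) (u : Pt n → ℝ) : ℝ :=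
  (lpP p Ω u + gagP p α Ω u) ^ (1 / p)

/-- `Ω_ε = {x ∈ Ω : dist(x, ∂Ω) ≤ ε}`. -/
def Oeps (Ω : Set (Pt n)) (ε : ℝ) : Set (Pt n) :=
  {x ∈ Ω | Metric.infDist x (frontier Ω) ≤ ε}

/-- The energy `Λ_{n,p}(1-α)[u]_{α,p}^p + ∫_Ω |u|^p`. -/
def energy (p α : ℝ) (Ω : Set (Pt n)) (u : Pt n → ℝ) : ℝ :=
  Lam n p * (1 - α) * gagP p α Ω u + lpP p Ω u

/-- The constraint sphere `S = {u ∈ W^{α,p} : (1/ε)∫_{Ω_ε}|u|^p = 1}`. -/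
def sphereS (p α ε : ℝ) (Ω : Set (Pt n)) (u : Pt n → ℝ) : Prop :=
  memW p α Ω u ∧ (1 / ε) * ∫ x in Oeps Ω ε, |u x| ^ p = 1

/-- The first eigenvalue `λ_{1,ε}`. -/
def lam1 (p α ε : ℝ) (Ω : Set (Pt n)) : ℝ :=
  sInf {r | ∃ u, sphereS p α ε Ω u ∧ r = energy p α Ω u}

/-- Positive part `u⁺`. -/
def pPart (u : Pt n → ℝ) (x : Pt n) : ℝ := max (u x) 0

/-- Negative part `u⁻`. -/
def nPart (u : Pt n → ℝ) (x : Pt n) : ℝ := max (-u x) 0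

/-- The functional `J_s`. -/
def Jfun (p α ε s : ℝ) (Ω : Set (Pt n)) (u : Pt n → ℝ) : ℝ :=
  energy p α Ω u - (s / ε) * ∫ x in Oeps Ω ε, pPart u x ^ p

/-- Weak solution of the Fučik problem `(F_p)` with parameters `(a,b)`. -/
def isWeakSol (p α ε a b : ℝ) (Ω : Set (Pt n)) (u : Pt n → ℝ) : Prop :=
  memW p α Ω u ∧ ∀ v, memW p α Ω v →
    Lam n p * (1 - α) * Hform p α Ω u v + (∫ x in Ω, |u x| ^ (p - 2) * u x * v x)
      = (a / ε) * (∫ x in Oeps Ω ε, pPart u x ^ (p - 1) * v x)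
        - (b / ε) * ∫ x in Oeps Ω ε, nPart u x ^ (p - 1) * v x

/-- The Fučik spectrum `Σ_p`. -/
def SigmaP (p α ε : ℝ) (Ω : Set (Pt n)) : Set (ℝ × ℝ) :=
  {ab | ∃ u : Pt n → ℝ, isWeakSol p α ε ab.1 ab.2 Ω u ∧ ¬ (∀ᵐ x : Pt n, u x = 0)}

/-- Continuity of a path `γ : [-1,1] → W^{α,p}` with respect to `‖·‖_{α,p}`. -/
def contPathW (p α : ℝ) (Ω : Set (Pt n)) (γ : ℝ → Pt n → ℝ) : Prop :=
  ∀ t ∈ Icc (-1 : ℝ) 1, ∀ δ > (0 : ℝ), ∃ η > (0 : ℝ), ∀ t' ∈ Icc (-1 : ℝ) 1,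
    |t' - t| < η → normW p α Ω (γ t' - γ t) < δ

/-- The family of paths `Γ` on `S` joining `-φ₁` to `φ₁`. -/
def GammaSet (p α ε : ℝ) (Ω : Set (Pt n)) (φ : Pt n → ℝ) : Set (ℝ → Pt n → ℝ) :=
  {γ | (∀ t ∈ Icc (-1 : ℝ) 1, sphereS p α ε Ω (γ t)) ∧ contPathW p α Ω γ ∧
    γ (-1) = -φ ∧ γ 1 = φ}

/-- The minimax value `c(s)`. -/
def cval (p α ε : ℝ) (Ω : Set (Pt n)) (φ : Pt n → ℝ) (s : ℝ) : ℝ :=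
  sInf {r | ∃ γ ∈ GammaSet p α ε Ω φ,
    r = sSup ((fun t => Jfun p α ε s Ω (γ t)) '' Icc (-1 : ℝ) 1)}

/-- Topology on functions generated by the balls of the seminorm `‖·‖_{α,p}`. -/
def topW (p α : ℝ) (Ω : Set (Pt n)) : TopologicalSpace (Pt n → ℝ) :=
  TopologicalSpace.generateFrom
    {B | ∃ (u : Pt n → ℝ) (r : ℝ), B = {v | normW p α Ω (v - u) < r}}

/-- First eigenvalue with constraint on a subregion `D`. -/
def lam1On (p α ε : ℝ) (Ω D : Set (Pt n)) : ℝ :=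
  sInf {r | ∃ u, memW p α Ω u ∧ (1 / ε) * (∫ x in D, |u x| ^ p) = 1 ∧
    r = energy p α Ω u}

/-- Primitive `F(x,s) = ∫_0^s f(x,t) dt`. -/
def Ffun (f : Pt n → ℝ → ℝ) (x : Pt n) (s : ℝ) : ℝ := ∫ t in (0:ℝ)..s, f x t

/-- The energy functional `Ψ` of the nonresonance problem (`p = 2`). -/
def Psi (α ε : ℝ) (Ω : Set (Pt n)) (f : Pt n → ℝ → ℝ) (u : Pt n → ℝ) : ℝ :=
  Lam n 2 * (1 - α) / 2 * gagP 2 α Ω u + (1 / 2) * lpP 2 Ω u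
    - (1 / ε) * ∫ x in Oeps Ω ε, Ffun f x (u x)

/-!
Write `c = |U - V|` and `w = |U - V|^{p-2}(U - V)`. Since `U V ≤ 0` we have `c = |U| + |V|`,
`w U = c^{p-1}|U|` and `w V = -c^{p-1}|V|`, so `g(t) ≤ g(1)` reduces to
`(|U| + |t||V|)^p ≤ c^{p-1}(|U| + |V||t|^p)`, which is Jensen's inequality for the convex
function `s ↦ s^p` at the points `1` and `|t|` with weights `|U|/c` and `|V|/c`.
The value `g(1) = w U` comes from `w (U - V) = c^p`.
-/

theorem rpow_add_mul_le_rpow_sub_one_mul {p a b s : ℝ} (hp : 1 ≤ p) (ha : 0 ≤ a) (hb : 0 ≤ b)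
    (hs : 0 ≤ s) : (a + b * s) ^ p ≤ (a + b) ^ (p - 1) * (a + b * s ^ p) := by
  rcases (add_nonneg ha hb).eq_or_lt with hab | hab
  · obtain ⟨rfl, rfl⟩ : a = 0 ∧ b = 0 := ⟨by linarith, by linarith⟩
    simp [zero_rpow (by linarith : p ≠ 0)]
  have jensen := (convexOn_rpow hp).2 (mem_Ici.2 zero_le_one) (mem_Ici.2 hs)
    (div_nonneg ha hab.le) (div_nonneg hb hab.le) (by field_simp)
  simp only [smul_eq_mul, one_rpow, mul_one] at jensen
  calc (a + b * s) ^ p = (a + b) ^ p * (a / (a + b) + b / (a + b) * s) ^ p := by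
        rw [← mul_rpow hab.le (by positivity)]
        congr 1
        field_simp
    _ ≤ (a + b) ^ p * (a / (a + b) + b / (a + b) * s ^ p) := by gcongr
    _ = (a + b) ^ (p - 1) * (a + b * s ^ p) := by
        rw [rpow_sub_one hab.ne']
        field_simp

theorem abs_rpow_sub_two_mul_self_mul_self {p : ℝ} (hp : p ≠ 0) (x : ℝ) :
    |x| ^ (p - 2) * x * x = |x| ^ p := by
  rcases eq_or_ne x 0 with rfl | hx
  · simp [zero_rpow hp]
  rw [mul_assoc, ← abs_mul_abs_self, ← Nat.cast_ofNat, rpow_sub_natCast (abs_ne_zero.2 hx)]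
  field_simp

theorem abs_sub_eq_abs_add_abs_of_mul_nonpos {U V : ℝ} (h : U * V ≤ 0) : |U - V| = |U| + |V| := by
  rcases mul_nonpos_iff.1 h with ⟨hU, hV⟩ | ⟨hU, hV⟩
  · rw [abs_of_nonneg (by linarith : 0 ≤ U - V), abs_of_nonneg hU, abs_of_nonpos hV]; ring
  · rw [abs_of_nonpos (by linarith : U - V ≤ 0), abs_of_nonpos hU, abs_of_nonneg hV]; ring

theorem abs_sub_mul_rpow_add_le_of_mul_nonpos {p U V : ℝ} (hp : 1 ≤ p) (hUV : U * V ≤ 0) (t : ℝ) :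
    |U - t * V| ^ p + |U - V| ^ (p - 2) * (U - V) * V * |t| ^ p
      ≤ |U - V| ^ (p - 2) * (U - V) * U := by
  have hsum := abs_sub_eq_abs_add_abs_of_mul_nonpos hUV
  rcases (abs_nonneg (U - V)).eq_or_lt with hc | hc
  · obtain ⟨rfl, rfl⟩ : U = 0 ∧ V = 0 := by
      constructor <;> apply abs_eq_zero.1 <;> linarith [abs_nonneg U, abs_nonneg V]
    simp [zero_rpow (by linarith : p ≠ 0)]
  set c := |U - V|
  have hcU : (U - V) * U = c * |U| := by
    rw [hsum, add_mul, abs_mul_abs_self, mul_comm |V|, ← abs_mul, abs_of_nonpos hUV]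
    ring
  have hcV : (U - V) * V = -(c * |V|) := by
    rw [hsum, add_mul, abs_mul_abs_self, ← abs_mul, abs_of_nonpos hUV]
    ring
  have hpow : c ^ (p - 2) * c = c ^ (p - 1) := by
    rw [← rpow_add_one hc.ne']; ring_nf
  have htri : |U - t * V| ≤ |U| + |V| * |t| := by
    simpa [abs_mul, mul_comm] using abs_sub U (t * V)
  calc |U - t * V| ^ p + c ^ (p - 2) * (U - V) * V * |t| ^ p
      = |U - t * V| ^ p - c ^ (p - 1) * (|V| * |t| ^ p) := by
        linear_combination (c ^ (p - 2) * |t| ^ p) * hcV - (|V| * |t| ^ p) * hpow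
    _ ≤ (|U| + |V| * |t|) ^ p - c ^ (p - 1) * (|V| * |t| ^ p) := by gcongr
    _ ≤ c ^ (p - 1) * (|U| + |V| * |t| ^ p) - c ^ (p - 1) * (|V| * |t| ^ p) := by
        gcongr
        rw [hsum]
        exact rpow_add_mul_le_rpow_sub_one_mul hp (abs_nonneg U) (abs_nonneg V) (abs_nonneg t)
    _ = c ^ (p - 2) * (U - V) * U := by
        linear_combination -(c ^ (p - 2)) * hcU - |U| * hpow

/-- for `1 ≤ p` and `U·V ≤ 0`, the function
`g(t) = |U - tV|^p + |U - V|^{p-2}(U - V)V|t|^p` satisfies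
`g(t) ≤ g(1) = |U - V|^{p-2}(U - V)U` for all `t`. -/
theorem stmt_18 (p U V : ℝ) (hp : 1 ≤ p) (hUV : U * V ≤ 0) :
    (∀ t : ℝ,
      |U - t * V| ^ p + |U - V| ^ (p - 2) * (U - V) * V * |t| ^ p
        ≤ |U - V| ^ (p - 2) * (U - V) * U) ∧
    |U - 1 * V| ^ p + |U - V| ^ (p - 2) * (U - V) * V * |(1 : ℝ)| ^ p
      = |U - V| ^ (p - 2) * (U - V) * U := by
  refine ⟨abs_sub_mul_rpow_add_le_of_mul_nonpos hp hUV, ?_⟩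
  rw [one_mul, abs_one, one_rpow, mul_one]
  linear_combination -abs_rpow_sub_two_mul_self_mul_self (by linarith : p ≠ 0) (U - V)
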